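/- Every rewrite step of the anti-pattern elimination rule !t → z ∖ t (where z is a fresh variable) preserves ground semantics: for any linear anti-terms p, p', if p rewrites in one step to p' by replacing a subterm !t by z ∖ t with z fresh, then ⟦p⟧ = ⟦p'⟧. -/

import Mathlib

/-- A constructor signature: a type of constructor symbols with arities. -/
structure Sig where
  C : Type
  ar : C → ℕ

/-- Values: ground constructor terms over the signature `S`. -/
inductive Val (S : Sig) : Type where
  | mk : (c : S.C) → (Fin (S.ar c) → Val S) → Val S

/-- Extended patterns over `C ∪ {!}`: variables, constructor applications,
sums, complements, `⊥`, and the complement symbol `!`. -/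
inductive Pat (S : Sig) : Type where
  | var : ℕ → Pat S
  | cons : (c : S.C) → (Fin (S.ar c) → Pat S) → Pat S
  | plus : Pat S → Pat S → Pat S
  | minus : Pat S → Pat S → Pat S
  | bot : Pat S
  | anti : Pat S → Pat S

namespace Pat

variable {S : Sig}

/-- Variables occurring in a pattern. -/
def vars : Pat S → Set ℕ
  | var x => {x}
  | cons _ ps => ⋃ i, vars (ps i)
  | plus p q => vars p ∪ vars q
  | minus p q => vars p ∪ vars q
  | bot => ∅
  | anti p => vars p

/-- Linearity of extended patterns with `!`. -/
inductive Linear : Pat S → Prop where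
  | var (x : ℕ) : Linear (var x)
  | cons (c : S.C) (ps : Fin (S.ar c) → Pat S) :
      (∀ i, Linear (ps i)) →
      (∀ i j, i ≠ j → Disjoint (vars (ps i)) (vars (ps j))) →
      Linear (cons c ps)
  | plus {p q : Pat S} : Linear p → Linear q → Linear (plus p q)
  | minus {p q : Pat S} : Linear p → Linear q → Disjoint (vars p) (vars q) →
      Linear (minus p q)
  | bot : Linear bot
  | anti {p : Pat S} : Linear p → Linear (anti p)

end Pat

/-- One-hole contexts over patterns. -/
inductive Ctx (S : Sig) : Type where
  | hole : Ctx S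
  | cons : (c : S.C) → (Fin (S.ar c) → Pat S) → Fin (S.ar c) → Ctx S → Ctx S
  | plusL : Ctx S → Pat S → Ctx S
  | plusR : Pat S → Ctx S → Ctx S
  | minusL : Ctx S → Pat S → Ctx S
  | minusR : Pat S → Ctx S → Ctx S
  | anti : Ctx S → Ctx S

namespace Ctx

variable {S : Sig}

/-- Filling the hole of a context with a pattern. -/
def fill : Ctx S → Pat S → Pat S
  | hole, t => t
  | cons c ps i K, t => Pat.cons c (Function.update ps i (fill K t))
  | plusL K q, t => Pat.plus (fill K t) q
  | plusR p K, t => Pat.plus p (fill K t)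
  | minusL K q, t => Pat.minus (fill K t) q
  | minusR p K, t => Pat.minus p (fill K t)
  | anti K, t => Pat.anti (fill K t)

/-- A context whose spine (the path from the root to the hole) consists only of
constructor symbols; in particular no position strictly above the hole is
labeled `!`. These are the contexts occurring in anti-terms. -/
inductive ConsSpine : Ctx S → Prop where
  | hole : ConsSpine hole
  | cons (c : S.C) (ps : Fin (S.ar c) → Pat S) (i : Fin (S.ar c)) {K : Ctx S} :
      ConsSpine K → ConsSpine (cons c ps i K)

end Ctx

/-- One step of the anti-pattern elimination rule `!t → z ∖ t` (applied at an
arbitrary position, with `z` a fresh variable). -/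
def AntiStep {S : Sig} (p p' : Pat S) : Prop :=
  ∃ (K : Ctx S) (t : Pat S) (z : ℕ),
    z ∉ Pat.vars p ∧ p = K.fill (Pat.anti t) ∧ p' = K.fill (Pat.minus (Pat.var z) t)

/-! The contextual clause at the empty context says `⟦!t⟧ = ⟦z⟧ ∖ ⟦t⟧ = ⟦z ∖ t⟧`.
Every clause of the semantics determines `⟦p⟧` from the semantics of the immediate
subpatterns of `p` (for `!q`, after choosing one variable fresh for all patterns
involved, which exists because patterns have finitely many variables), so equal
semantics propagates through any context. -/

namespace Pat

variable {S : Sig}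

theorem vars_finite : ∀ p : Pat S, p.vars.Finite
  | var x => Set.finite_singleton x
  | cons _ ps => Set.finite_iUnion fun i => vars_finite (ps i)
  | plus p q => (vars_finite p).union (vars_finite q)
  | minus p q => (vars_finite p).union (vars_finite q)
  | bot => Set.finite_empty
  | anti p => vars_finite p

theorem exists_fresh_var (p q : Pat S) :
    ∃ z, z ∉ p.vars ∧ z ∉ q.vars := by
  obtain ⟨z, hz⟩ := ((p.vars_finite.union q.vars_finite).infinite_compl).nonempty
  exact ⟨z, fun h => hz (Or.inl h), fun h => hz (Or.inr h)⟩

end Pat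

namespace Ctx

variable {S : Sig}

theorem vars_subset_vars_fill : ∀ (K : Ctx S) (q : Pat S), q.vars ⊆ (K.fill q).vars
  | hole, _ => subset_rfl
  | cons _ _ i K, q => (vars_subset_vars_fill K q).trans fun _ hx =>
      Set.mem_iUnion.2 ⟨i, by simpa using hx⟩
  | plusL K _, q => (vars_subset_vars_fill K q).trans Set.subset_union_left
  | plusR _ K, q => (vars_subset_vars_fill K q).trans Set.subset_union_right
  | minusL K _, q => (vars_subset_vars_fill K q).trans Set.subset_union_left
  | minusR _ K, q => (vars_subset_vars_fill K q).trans Set.subset_union_right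
  | anti K, q => vars_subset_vars_fill K q

end Ctx

section Compositional

variable {S : Sig} {Sem : Pat S → Set (Val S)}

theorem sem_cons_congr
    (hcons : ∀ (c : S.C) (ps : Fin (S.ar c) → Pat S),
      Sem (Pat.cons c ps) =
        {v | ∃ vs : Fin (S.ar c) → Val S, v = Val.mk c vs ∧ ∀ i, vs i ∈ Sem (ps i)})
    (c : S.C) {ps qs : Fin (S.ar c) → Pat S} (h : ∀ i, Sem (ps i) = Sem (qs i)) :
    Sem (Pat.cons c ps) = Sem (Pat.cons c qs) := by
  simp only [hcons, h]

theorem sem_anti_congr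
    (hanti : ∀ t z, z ∉ Pat.vars t → Sem (Pat.anti t) = Sem (Pat.var z) \ Sem t)
    {a b : Pat S} (h : Sem a = Sem b) : Sem (Pat.anti a) = Sem (Pat.anti b) := by
  obtain ⟨z, hza, hzb⟩ := Pat.exists_fresh_var a b
  rw [hanti a z hza, hanti b z hzb, h]

theorem sem_fill_congr
    (hcons : ∀ (c : S.C) (ps : Fin (S.ar c) → Pat S),
      Sem (Pat.cons c ps) =
        {v | ∃ vs : Fin (S.ar c) → Val S, v = Val.mk c vs ∧ ∀ i, vs i ∈ Sem (ps i)})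
    (hplus : ∀ p q, Sem (Pat.plus p q) = Sem p ∪ Sem q)
    (hminus : ∀ p q, Sem (Pat.minus p q) = Sem p \ Sem q)
    (hanti : ∀ t z, z ∉ Pat.vars t → Sem (Pat.anti t) = Sem (Pat.var z) \ Sem t)
    (K : Ctx S) {a b : Pat S} (h : Sem a = Sem b) : Sem (K.fill a) = Sem (K.fill b) := by
  induction K with
  | hole => exact h
  | cons c ps i K ih =>
    refine sem_cons_congr hcons c fun j => ?_
    rcases eq_or_ne j i with rfl | hji
    · simpa using ih
    · simp [hji]
  | plusL K q ih => simp only [Ctx.fill, hplus, ih]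
  | plusR p K ih => simp only [Ctx.fill, hplus, ih]
  | minusL K q ih => simp only [Ctx.fill, hminus, ih]
  | minusR p K ih => simp only [Ctx.fill, hminus, ih]
  | anti K ih => exact sem_anti_congr hanti ih

end Compositional

theorem stmt5_general (S : Sig) (Sem : Pat S → Set (Val S))
    (hcons : ∀ (c : S.C) (ps : Fin (S.ar c) → Pat S),
      Sem (Pat.cons c ps) =
        {v | ∃ vs : Fin (S.ar c) → Val S, v = Val.mk c vs ∧ ∀ i, vs i ∈ Sem (ps i)})
    (hplus : ∀ p q, Sem (Pat.plus p q) = Sem p ∪ Sem q)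
    (hminus : ∀ p q, Sem (Pat.minus p q) = Sem p \ Sem q)
    (hanti : ∀ (K : Ctx S) (t : Pat S) (z : ℕ), K.ConsSpine →
      z ∉ Pat.vars (K.fill t) →
      Sem (K.fill (Pat.anti t)) = Sem (K.fill (Pat.var z)) \ Sem (K.fill t))
    (p p' : Pat S) (hstep : AntiStep p p') :
    Sem p = Sem p' := by
  obtain ⟨K, t, z, hz, rfl, rfl⟩ := hstep
  have hanti_root : ∀ t z, z ∉ Pat.vars t → Sem (Pat.anti t) = Sem (Pat.var z) \ Sem t :=
    fun t z => hanti .hole t z .hole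
  refine sem_fill_congr hcons hplus hminus hanti_root K ?_
  rw [hanti_root t z fun h => hz (K.vars_subset_vars_fill _ h), hminus]

/-- Anti-pattern semantics preservation: for every ground
semantics `Sem` satisfying the defining equations of the paper — the recursive
clauses for variables, constructor applications, sums, complements and `⊥`,
together with the contextual clause `⟦t[!t']_ω⟧ = ⟦t[z]_ω⟧ \ ⟦t[t']_ω⟧` for
`z` fresh and no position strictly above `ω` labeled `!` — one rewrite step of
the rule `!t → z ∖ t` preserves the semantics. -/
theorem stmt5 (S : Sig) (Sem : Pat S → Set (Val S))
    (hvar : ∀ x, Sem (Pat.var x) = Set.univ)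
    (hcons : ∀ (c : S.C) (ps : Fin (S.ar c) → Pat S),
      Sem (Pat.cons c ps) =
        {v | ∃ vs : Fin (S.ar c) → Val S, v = Val.mk c vs ∧ ∀ i, vs i ∈ Sem (ps i)})
    (hplus : ∀ p q, Sem (Pat.plus p q) = Sem p ∪ Sem q)
    (hminus : ∀ p q, Sem (Pat.minus p q) = Sem p \ Sem q)
    (hbot : Sem Pat.bot = ∅)
    (hanti : ∀ (K : Ctx S) (t : Pat S) (z : ℕ), K.ConsSpine →
      z ∉ Pat.vars (K.fill t) →
      Sem (K.fill (Pat.anti t)) = Sem (K.fill (Pat.var z)) \ Sem (K.fill t))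
    (p p' : Pat S) (hlin : p.Linear) (hstep : AntiStep p p') :
    Sem p = Sem p' :=
  stmt5_general S Sem hcons hplus hminus hanti p p' hstep
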